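/- arXiv:1908.10781 — 7 statements merged into one kernel-verified Lean document; each statement's English description precedes it below -/
import Mathlib

section
/- Let α₁, α₂ > 0 with α₁ + α₂ < 1, and let f ∈ (0, α₁). The attacker's one-sided FAW payoff with perfect network capability, U(f) = (α₁−f)/((1−f)α₁) + (f/α₁)·(α₂ + f(1−α₁−α₂))/((1−f)(α₂+f)) − 1, equals α₂·f(α₁−f)/(α₁(1−f)(α₂+f)), which is strictly positive. -/
/-- Attacker's one-sided FAW payoff: closed form and strict positivity. -/
theorem attacker_faw_payoff (α₁ α₂ f : ℝ) (hα₁ : 0 < α₁) (hα₂ : 0 < α₂)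
    (hsum : α₁ + α₂ < 1) (hf0 : 0 < f) (hf : f < α₁) :
    (α₁ - f) / ((1 - f) * α₁)
        + (f / α₁) * ((α₂ + f * (1 - α₁ - α₂)) / ((1 - f) * (α₂ + f))) - 1
      = α₂ * (f * (α₁ - f)) / (α₁ * (1 - f) * (α₂ + f)) ∧
    0 < α₂ * (f * (α₁ - f)) / (α₁ * (1 - f) * (α₂ + f)) := by
  have h1f : (0:ℝ) < 1 - f := by nlinarith
  have h2 : (0:ℝ) < α₂ + f := by linarith
  constructor
  · field_simp
    ring
  · have hd : 0 < α₁ - f := by linarith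
    exact div_pos (by positivity) (by positivity)
end

section
/- Let α₁, α₂ > 0 with α₁ + α₂ < 1, and let f ∈ (0, α₁). The victim's one-sided FAW payoff (α₂ + f(1−α₁−α₂))/((1−f)(α₂+f)) − 1 equals −f(α₁−f)/((1−f)(α₂+f)), and in particular is strictly negative. -/
/-- Victim's one-sided FAW payoff: closed form and strict negativity. -/
theorem victim_faw_payoff (α₁ α₂ f : ℝ) (hα₁ : 0 < α₁) (hα₂ : 0 < α₂)
    (hsum : α₁ + α₂ < 1) (hf0 : 0 < f) (hf : f < α₁) :
    (α₂ + f * (1 - α₁ - α₂)) / ((1 - f) * (α₂ + f)) - 1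
      = -(f * (α₁ - f)) / ((1 - f) * (α₂ + f)) ∧
    (α₂ + f * (1 - α₁ - α₂)) / ((1 - f) * (α₂ + f)) - 1 < 0 := by
  have h1 : 0 < 1 - f := by linarith
  have h2 : 0 < α₂ + f := by linarith
  have hd : (1 - f) * (α₂ + f) ≠ 0 := by positivity
  have heq : (α₂ + f * (1 - α₁ - α₂)) / ((1 - f) * (α₂ + f)) - 1
      = -(f * (α₁ - f)) / ((1 - f) * (α₂ + f)) := by
    field_simp
    ring
  refine ⟨heq, ?_⟩
  rw [heq, neg_div]
  have hnum : 0 < f * (α₁ - f) := by nlinarith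
  have : 0 < f * (α₁ - f) / ((1 - f) * (α₂ + f)) := div_pos hnum (by positivity)
  linarith
end

section
/- For the same infiltration power p ∈ (0, α₁), the one-sided FAW attack is strictly more profitable for the attacker than the one-sided BWH attack: α₂ p(α₁−p)/(α₁(1−p)(α₂+p)) − p(α₁α₂ − p(1−α₁))/(α₁(1−p)(α₂+p)) = p²(1−α₁−α₂)/(α₁(1−p)(α₂+p)) > 0, whenever α₁, α₂ > 0 and α₁ + α₂ < 1. -/
/-- With equal infiltration power, FAW is strictly more profitable than BWH
for the attacker. -/
theorem faw_more_profitable_than_bwh (α₁ α₂ p : ℝ) (hα₁ : 0 < α₁) (hα₂ : 0 < α₂)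
    (hsum : α₁ + α₂ < 1) (hp0 : 0 < p) (hp : p < α₁) :
    α₂ * p * (α₁ - p) / (α₁ * (1 - p) * (α₂ + p))
        - p * (α₁ * α₂ - p * (1 - α₁)) / (α₁ * (1 - p) * (α₂ + p))
      = p ^ 2 * (1 - α₁ - α₂) / (α₁ * (1 - p) * (α₂ + p)) ∧
    0 < p ^ 2 * (1 - α₁ - α₂) / (α₁ * (1 - p) * (α₂ + p)) := by
  have hp1 : p < 1 := lt_trans hp (by linarith)
  have hq : 0 < 1 - p := by linarith
  have hden : 0 < α₁ * (1 - p) * (α₂ + p) := by positivity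
  constructor
  · rw [div_sub_div_same]; ring_nf
  · apply div_pos _ hden
    have : 0 < 1 - α₁ - α₂ := by linarith
    positivity
end

section
/- For the same infiltration power p ∈ (0, α₁), the one-sided BWH attack damages the victim strictly more than the one-sided FAW attack: the victim's BWH loss p(1−α₂−p)/((1−p)(α₂+p)) minus the victim's FAW loss p(α₁−p)/((1−p)(α₂+p)) equals p(1−α₁−α₂)/((1−p)(α₂+p)) > 0, whenever α₁, α₂ > 0 and α₁ + α₂ < 1. -/
/-- With equal infiltration power, BWH damages the victim strictly more than FAW. -/
theorem bwh_damages_more_than_faw (α₁ α₂ p : ℝ) (hα₁ : 0 < α₁) (hα₂ : 0 < α₂)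
    (hsum : α₁ + α₂ < 1) (hp0 : 0 < p) (hp : p < α₁) :
    p * (1 - α₂ - p) / ((1 - p) * (α₂ + p))
        - p * (α₁ - p) / ((1 - p) * (α₂ + p))
      = p * (1 - α₁ - α₂) / ((1 - p) * (α₂ + p)) ∧
    0 < p * (1 - α₁ - α₂) / ((1 - p) * (α₂ + p)) := by
  constructor
  · rw [div_sub_div_same]; ring_nf
  · apply div_pos
    · apply mul_pos hp0; linarith
    · apply mul_pos <;> nlinarith
end

section
/- Miner's dilemma in the symmetric mutual BWH attack: let α ∈ (0, 1/2) and b ∈ (0, α) with 2b < 1. The unique real U satisfying the fixed-point equation U = (α−b)/((1−2b)(α+b)) + (U+1)·b/(α+b) − 1 is U = b(2α−1)/((1−2b)α), and this value is strictly negative. -/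
/-- Miner's dilemma in the symmetric mutual BWH attack: the unique fixed-point
payoff is `b(2α−1)/((1−2b)α)`, which is strictly negative. -/
theorem symmetric_mutual_bwh_dilemma (α b : ℝ) (hα0 : 0 < α) (hα : α < 1 / 2)
    (hb0 : 0 < b) (hb : b < α) (h2b : 2 * b < 1) :
    (∀ U : ℝ,
      U = (α - b) / ((1 - 2 * b) * (α + b)) + (U + 1) * b / (α + b) - 1
        ↔ U = b * (2 * α - 1) / ((1 - 2 * b) * α)) ∧
    b * (2 * α - 1) / ((1 - 2 * b) * α) < 0 := by
  have h1 : (0:ℝ) < 1 - 2 * b := by linarith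
  have h2 : (0:ℝ) < α + b := by linarith
  constructor
  · intro U
    have e1 : ((1:ℝ) - 2*b) ≠ 0 := by positivity
    have e2 : α + b ≠ 0 := by positivity
    have e3 : α ≠ 0 := ne_of_gt hα0
    have e4 : (1:ℝ) - b * 2 ≠ 0 := ne_of_gt (by linarith)
    field_simp
    constructor <;> intro h <;> nlinarith [sq_nonneg α, sq_nonneg b, mul_pos h1 h2,
      mul_pos hα0 h1, mul_pos (mul_pos hα0 h1) h2]
  · apply div_neg_of_neg_of_pos
    · nlinarith
    · positivity
end

section
/- FAW weakly dominates BWH in the coupled two-pool game: let α₁, α₂ > 0 with α₁ + α₂ < 1, f ∈ (0, α₁], b ∈ [0, α₂] with f + b < 1. Let (x, y) be the unique solution of x = A₁ + (f/(α₁+b))y, y = A₂ + B₂ + (b/(α₂+f))x, and let (x', y') be the unique solution of the same system with B₂ replaced by 0, where A₁ = (α₁−f)/((1−f−b)(α₁+b)), A₂ = (α₂−b)/((1−b−f)(α₂+f)), and B₂ = f(1−α₁−α₂)/((1−b)(1−b−f)(α₂+f)) > 0. Then x > x' and y > y'; i.e., switching Pool 1's attack from BWH to FAW (same infiltration f) strictly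 increases Pool 1's payoff U^{FB}(f,b) above U^{BB}(f,b). -/
/-- FAW weakly dominates BWH in the coupled two-pool game: adding the fork-reward
term `B₂ > 0` strictly increases both components of the solution of the coupled
payoff system. -/
theorem faw_dominates_bwh_coupled (α₁ α₂ f b : ℝ) (hα₁ : 0 < α₁) (hα₂ : 0 < α₂)
    (hsum : α₁ + α₂ < 1) (hf0 : 0 < f) (hf : f ≤ α₁) (hb0 : 0 ≤ b) (hb : b ≤ α₂)
    (hfb : f + b < 1)
    (A₁ A₂ B₂ : ℝ)
    (hA₁ : A₁ = (α₁ - f) / ((1 - f - b) * (α₁ + b)))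
    (hA₂ : A₂ = (α₂ - b) / ((1 - b - f) * (α₂ + f)))
    (hB₂ : B₂ = f * (1 - α₁ - α₂) / ((1 - b) * (1 - b - f) * (α₂ + f)))
    (x y x' y' : ℝ)
    (hx : x = A₁ + (f / (α₁ + b)) * y)
    (hy : y = A₂ + B₂ + (b / (α₂ + f)) * x)
    (hx' : x' = A₁ + (f / (α₁ + b)) * y')
    (hy' : y' = A₂ + (b / (α₂ + f)) * x') :
    0 < B₂ ∧ x' < x ∧ y' < y := by
  have hab : 0 < α₁ + b := by linarith
  have haf : 0 < α₂ + f := by linarith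
  have hbf : 0 < 1 - b - f := by linarith
  have h1b : 0 < 1 - b := by linarith
  have h1s : 0 < 1 - α₁ - α₂ := by linarith
  have hBpos : 0 < B₂ := by
    rw [hB₂]
    apply div_pos (mul_pos hf0 h1s)
    positivity
  have hc : 0 < f / (α₁ + b) := div_pos hf0 hab
  have hd : 0 ≤ b / (α₂ + f) := div_nonneg hb0 haf.le
  have hcd : (f / (α₁ + b)) * (b / (α₂ + f)) < 1 := by
    rw [div_mul_div_comm, div_lt_one (by positivity)]
    nlinarith
  have h1 : x - x' = (f / (α₁ + b)) * (y - y') := by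
    rw [hx, hx']; ring
  have h2 : y - y' = B₂ + (b / (α₂ + f)) * (x - x') := by
    rw [hy, hy']; ring
  have hyv : 0 < y - y' := by nlinarith
  refine ⟨hBpos, by nlinarith, by linarith⟩
end

section
/- Nash equilibrium lifting (Lemma 1 of the paper): consider a two-player game where player i's action set is {F, B} × [0, αᵢ] and payoffs Uᵢ satisfy, for every p ∈ (0, αᵢ] and every opponent action a, Uᵢ((B, p), a) < Uᵢ((F, p), a), and Uᵢ((B, 0), a) = Uᵢ((F, 0), a). Then a pair (p₁, p₂) ∈ [0, α₁] × [0, α₂] is a Nash equilibrium of the restricted game (where both players are constrained to F-actions) if and only if ((F, p₁), (F, p₂)) is a Nash equilibrium of the full game. -/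
/-- Attack type: fork-after-withholding (`F`) or block-withholding (`B`). -/
inductive AttackType : Type
  | F : AttackType
  | B : AttackType

open AttackType

/-- Nash equilibrium lifting (Lemma 1): if for every positive infiltration power
the FAW action strictly dominates the BWH action with the same power (with
equality at power 0), then `(p₁, p₂)` is a Nash equilibrium of the FAW-restricted
game iff `((F,p₁),(F,p₂))` is a Nash equilibrium of the full game. -/
theorem nash_equilibrium_lifting (α₁ α₂ : ℝ) (hα₁ : 0 < α₁) (hα₂ : 0 < α₂)
    (U₁ : AttackType × ℝ → AttackType × ℝ → ℝ)
    (U₂ : AttackType × ℝ → AttackType × ℝ → ℝ)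
    (h1 : ∀ p ∈ Set.Ioc (0 : ℝ) α₁, ∀ a : AttackType × ℝ,
      U₁ (B, p) a < U₁ (F, p) a)
    (h1' : ∀ a : AttackType × ℝ, U₁ (B, 0) a = U₁ (F, 0) a)
    (h2 : ∀ p ∈ Set.Ioc (0 : ℝ) α₂, ∀ a : AttackType × ℝ,
      U₂ (B, p) a < U₂ (F, p) a)
    (h2' : ∀ a : AttackType × ℝ, U₂ (B, 0) a = U₂ (F, 0) a)
    (p₁ p₂ : ℝ) (hp₁ : p₁ ∈ Set.Icc 0 α₁) (hp₂ : p₂ ∈ Set.Icc 0 α₂) :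
    ((∀ q₁ ∈ Set.Icc (0 : ℝ) α₁, U₁ (F, q₁) (F, p₂) ≤ U₁ (F, p₁) (F, p₂)) ∧
     (∀ q₂ ∈ Set.Icc (0 : ℝ) α₂, U₂ (F, q₂) (F, p₁) ≤ U₂ (F, p₂) (F, p₁)))
    ↔
    ((∀ a₁ : AttackType × ℝ, a₁.2 ∈ Set.Icc (0 : ℝ) α₁ →
        U₁ a₁ (F, p₂) ≤ U₁ (F, p₁) (F, p₂)) ∧
     (∀ a₂ : AttackType × ℝ, a₂.2 ∈ Set.Icc (0 : ℝ) α₂ →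
        U₂ a₂ (F, p₁) ≤ U₂ (F, p₂) (F, p₁))) := by
  constructor
  · rintro ⟨H1, H2⟩
    constructor
    · rintro ⟨t, q⟩ hq
      cases t with
      | F => exact H1 q hq
      | B =>
        rcases eq_or_lt_of_le hq.1 with h0 | h0
        · subst h0
          rw [h1' (F, p₂)]
          exact H1 0 ⟨le_refl 0, le_of_lt hα₁⟩
        · exact le_trans (le_of_lt (h1 q ⟨h0, hq.2⟩ (F, p₂))) (H1 q hq)
    · rintro ⟨t, q⟩ hq
      cases t with
      | F => exact H2 q hq
      | B =>
        rcases eq_or_lt_of_le hq.1 with h0 | h0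
        · subst h0
          rw [h2' (F, p₁)]
          exact H2 0 ⟨le_refl 0, le_of_lt hα₂⟩
        · exact le_trans (le_of_lt (h2 q ⟨h0, hq.2⟩ (F, p₁))) (H2 q hq)
  · rintro ⟨H1, H2⟩
    exact ⟨fun q hq => H1 (F, q) hq, fun q hq => H2 (F, q) hq⟩
end
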